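/- Every Dedekind cut of rationals (inhabited, disjoint, rounded, downward/upward closed, located) determines a unique real number: there exists a unique r : ℝ such that the lower cut equals { p : ℚ | (p : ℝ) < r } and the upper cut equals { q : ℚ | r < (q : ℝ) }. -/
import Mathlib


/-- Every Dedekind cut of rationals determines a unique real number. -/
theorem stmt11 (L U : Set ℚ)
    (hLI : ∃ p, p ∈ L) (hUI : ∃ q, q ∈ U)
    (hdisj : L ∩ U = ∅)
    (hLdown : ∀ p q : ℚ, p ∈ L → q < p → q ∈ L)
    (hLround : ∀ p ∈ L, ∃ p' ∈ L, p < p')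
    (hUup : ∀ p q : ℚ, p ∈ U → p < q → q ∈ U)
    (hUround : ∀ q ∈ U, ∃ q' ∈ U, q' < q)
    (hloc : ∀ p q : ℚ, p < q → p ∈ L ∨ q ∈ U) :
    ∃! r : ℝ, L = {p : ℚ | (p : ℝ) < r} ∧ U = {q : ℚ | r < (q : ℝ)} := by
  have hdisj' : ∀ p, p ∈ L → p ∉ U := by
    intro p hp hpu
    have : p ∈ L ∩ U := ⟨hp, hpu⟩
    simp [hdisj] at this
  have hLU : ∀ p ∈ L, ∀ q ∈ U, p < q := by
    intro p hp q hq
    rcases lt_trichotomy p q with h | h | h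
    · exact h
    · exact absurd (h ▸ hq) (hdisj' p hp)
    · exact absurd (hLdown p q hp h) (fun h' => hdisj' q h' hq)
  set S : Set ℝ := (↑) '' L with hS
  obtain ⟨p0, hp0⟩ := hLI
  obtain ⟨q0, hq0⟩ := hUI
  have hSne : S.Nonempty := ⟨p0, p0, hp0, rfl⟩
  have hSbdd : BddAbove S := by
    refine ⟨(q0 : ℝ), ?_⟩
    rintro x ⟨p, hp, rfl⟩
    exact_mod_cast (hLU p hp q0 hq0).le
  set r := sSup S with hr
  have hmemL : ∀ p : ℚ, p ∈ L ↔ (p : ℝ) < r := by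
    intro p
    constructor
    · intro hp
      obtain ⟨p', hp', hlt⟩ := hLround p hp
      have : (p' : ℝ) ≤ r := le_csSup hSbdd ⟨p', hp', rfl⟩
      exact lt_of_lt_of_le (by exact_mod_cast hlt) this
    · intro hp
      have : ∃ x ∈ S, (p : ℝ) < x := exists_lt_of_lt_csSup hSne hp
      obtain ⟨x, ⟨p', hp', rfl⟩, hlt⟩ := this
      exact hLdown p' p hp' (by exact_mod_cast hlt)
  have hmemU : ∀ q : ℚ, q ∈ U ↔ r < (q : ℝ) := by
    intro q
    constructor
    · intro hq
      obtain ⟨q', hq', hlt⟩ := hUround q hq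
      have hub : r ≤ (q' : ℝ) := csSup_le hSne (by rintro x ⟨p, hp, rfl⟩; exact_mod_cast (hLU p hp q' hq').le)
      exact lt_of_le_of_lt hub (by exact_mod_cast hlt)
    · intro hq
      obtain ⟨m, hm1, hm2⟩ := exists_rat_btwn hq
      have hmL : m ∉ L := fun h => absurd ((hmemL m).mp h) (not_lt.mpr hm1.le)
      rcases hloc m q (by exact_mod_cast hm2) with h | h
      · exact absurd h hmL
      · exact h
  refine ⟨r, ⟨Set.ext fun p => hmemL p, Set.ext fun q => hmemU q⟩, ?_⟩
  rintro r' ⟨hL', hU'⟩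
  by_contra hne
  rcases lt_or_gt_of_ne hne with h | h
  · obtain ⟨m, hm1, hm2⟩ := exists_rat_btwn h
    have hmU : m ∈ U := hU' ▸ (Set.mem_setOf_eq ▸ hm1)
    have hmL : m ∈ L := (hmemL m).mpr hm2
    exact hdisj' m hmL hmU
  · obtain ⟨m, hm1, hm2⟩ := exists_rat_btwn h
    have hmU : m ∈ U := (hmemU m).mpr hm1
    have hmL : m ∈ L := hL' ▸ (Set.mem_setOf_eq ▸ hm2)
    exact hdisj' m hmL hmU
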